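/- arXiv:1703.03111 — 4 statements merged into one kernel-verified Lean document; each statement's English description precedes it below -/
import Mathlib

section
/- Let C be a monotone submodular function with curvature κ < 1, and let v_i = E_{S∼D, i∉S}[C(S∪{i}) − C(S)] be the expected marginal contribution of i to a random set drawn from a distribution D over subsets of N∖{i} (with v_i > 0). Then the Shapley value φ_i of i satisfies (1−κ)·v_i ≤ φ_i ≤ v_i/(1−κ). -/
theorem stmt7 (n : ℕ) (C : Finset (Fin n) → ℝ) (κ : ℝ) (hκ0 : 0 ≤ κ) (hκ1 : κ < 1)
    (hmono : ∀ A B : Finset (Fin n), A ⊆ B → C A ≤ C B)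
    (hsub : ∀ (A B : Finset (Fin n)) (j : Fin n), A ⊆ B → j ∉ B →
      C (insert j B) - C B ≤ C (insert j A) - C A)
    (i : Fin n)
    (hcurv : ∀ S T : Finset (Fin n), i ∉ S → i ∉ T →
      (1 - κ) * (C (insert i T) - C T) ≤ C (insert i S) - C S)
    (p : Finset (Fin n) → ℝ) (hp0 : ∀ S, 0 ≤ p S)
    (hp1 : ∑ S ∈ (Finset.univ.erase i).powerset, p S = 1)
    (v : ℝ)
    (hv : v = ∑ S ∈ (Finset.univ.erase i).powerset, p S * (C (insert i S) - C S))
    (hvpos : 0 < v) :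
    (1 - κ) * v ≤
        (∑ S ∈ (Finset.univ.erase i).powerset,
          ((S.card.factorial * (n - S.card - 1).factorial : ℝ) / (n.factorial : ℝ)) *
            (C (insert i S) - C S)) ∧
      (∑ S ∈ (Finset.univ.erase i).powerset,
          ((S.card.factorial * (n - S.card - 1).factorial : ℝ) / (n.factorial : ℝ)) *
            (C (insert i S) - C S)) ≤ v / (1 - κ) := by
  have hpos : (0:ℝ) < 1 - κ := by linarith
  have hn : 0 < n := i.pos
  set P := (Finset.univ.erase i).powerset with hP
  have hnotmem : ∀ S ∈ P, i ∉ S := by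
    intro S hS
    rw [hP, Finset.mem_powerset] at hS
    intro h
    exact (Finset.mem_erase.1 (hS h)).1 rfl
  -- marginal contribution bounds
  have hmlb : ∀ T ∈ P, (1 - κ) * v ≤ C (insert i T) - C T := by
    intro T hT
    have : (1 - κ) * v = ∑ S ∈ P, p S * ((1 - κ) * (C (insert i S) - C S)) := by
      rw [hv, Finset.mul_sum]; apply Finset.sum_congr rfl; intro S hS; ring
    rw [this]
    calc ∑ S ∈ P, p S * ((1 - κ) * (C (insert i S) - C S))
        ≤ ∑ S ∈ P, p S * (C (insert i T) - C T) := by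
          apply Finset.sum_le_sum
          intro S hS
          exact mul_le_mul_of_nonneg_left (hcurv T S (hnotmem T hT) (hnotmem S hS)) (hp0 S)
      _ = C (insert i T) - C T := by rw [← Finset.sum_mul, hp1, one_mul]
  have hmub : ∀ T ∈ P, C (insert i T) - C T ≤ v / (1 - κ) := by
    intro T hT
    rw [le_div_iff₀ hpos]
    have : (C (insert i T) - C T) * (1 - κ) = ∑ S ∈ P, p S * ((1 - κ) * (C (insert i T) - C T)) := by
      rw [← Finset.sum_mul, hp1]; ring
    rw [this, hv]
    apply Finset.sum_le_sum
    intro S hS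
    exact mul_le_mul_of_nonneg_left (hcurv S T (hnotmem S hS) (hnotmem T hT)) (hp0 S)
  -- weights
  set w : Finset (Fin n) → ℝ :=
    fun S => ((S.card.factorial * (n - S.card - 1).factorial : ℝ) / (n.factorial : ℝ)) with hw
  have hw0 : ∀ S, 0 ≤ w S := by
    intro S
    apply div_nonneg <;> positivity
  have hcard : (Finset.univ.erase i).card = n - 1 := by
    rw [Finset.card_erase_of_mem (Finset.mem_univ i), Finset.card_univ, Fintype.card_fin]
  have hw1 : ∑ S ∈ P, w S = 1 := by
    rw [hP, hw]
    have key := Finset.sum_powerset_apply_card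
      (fun k : ℕ => ((k.factorial * (n - k - 1).factorial : ℝ) / (n.factorial : ℝ)))
      (x := Finset.univ.erase i)
    simp only [hcard] at key
    rw [key]
    have hterm : ∀ k ∈ Finset.range (n - 1 + 1),
        (n-1).choose k • (((k.factorial * (n - k - 1).factorial : ℝ)) / (n.factorial : ℝ))
        = ((n-1).factorial : ℝ) / (n.factorial : ℝ) := by
      intro k hk
      rw [Finset.mem_range, Nat.lt_succ_iff] at hk
      have h1 : n - k - 1 = (n-1) - k := by omega
      have h2 : (n-1).choose k * k.factorial * ((n-1) - k).factorial = (n-1).factorial :=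
        Nat.choose_mul_factorial_mul_factorial hk
      have h2' : (((n-1).choose k : ℝ)) * (k.factorial : ℝ) * (((n-1)-k).factorial : ℝ)
          = ((n-1).factorial : ℝ) := by exact_mod_cast h2
      rw [h1, nsmul_eq_mul, ← h2']
      ring
    rw [Finset.sum_congr rfl hterm, Finset.sum_const, Finset.card_range, nsmul_eq_mul]
    have h3 : n * (n-1).factorial = n.factorial := by
      cases n with
      | zero => omega
      | succ m => simp [Nat.factorial_succ, Nat.succ_sub_one]
    have h4 : (n.factorial : ℝ) ≠ 0 := by positivity
    rw [show n - 1 + 1 = n from by omega]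
    field_simp
    exact_mod_cast h3
  constructor
  · calc (1 - κ) * v = ∑ S ∈ P, w S * ((1 - κ) * v) := by rw [← Finset.sum_mul, hw1, one_mul]
      _ ≤ ∑ S ∈ P, w S * (C (insert i S) - C S) := by
          apply Finset.sum_le_sum
          intro S hS
          exact mul_le_mul_of_nonneg_left (hmlb S hS) (hw0 S)
  · calc ∑ S ∈ P, w S * (C (insert i S) - C S)
        ≤ ∑ S ∈ P, w S * (v / (1 - κ)) := by
          apply Finset.sum_le_sum
          intro S hS
          exact mul_le_mul_of_nonneg_left (hmub S hS) (hw0 S)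
      _ = v / (1 - κ) := by rw [← Finset.sum_mul, hw1, one_mul]
end

section
/- For a submodular function C and any permutation σ of N, the marginal-contribution allocation ψ_i = C(S_{σ<i} ∪ {i}) − C(S_{σ<i}) is in the core: it is balanced and satisfies ∑_{i∈S} ψ_i ≤ C(S) for every S ⊆ N. -/
theorem stmt10 (n : ℕ) (C : Finset (Fin n) → ℝ) (h0 : C ∅ = 0)
    (hsub : ∀ (A B : Finset (Fin n)) (i : Fin n), A ⊆ B → i ∉ B →
      C (insert i B) - C B ≤ C (insert i A) - C A)
    (σ : Equiv.Perm (Fin n))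
    (ψ : Fin n → ℝ)
    (hψ : ∀ i, ψ i = C (insert i (Finset.univ.filter (fun j => σ j < σ i))) -
      C (Finset.univ.filter (fun j => σ j < σ i))) :
    ∑ i, ψ i = C Finset.univ ∧ ∀ S : Finset (Fin n), ∑ i ∈ S, ψ i ≤ C S := by
  set U : ℕ → Finset (Fin n) := fun k => Finset.univ.filter (fun j => (σ j).val < k) with hU
  have hU0 : ∀ S : Finset (Fin n), S ∩ U 0 = ∅ := by
    intro S; ext j; simp [hU]
  have hUn : ∀ S : Finset (Fin n), S ∩ U n = S := by
    intro S; ext j; simp [hU, (σ j).isLt]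
  have hins : ∀ (S : Finset (Fin n)) (i : Fin n), i ∈ S →
      insert i (S ∩ U (σ i).val) = S ∩ U ((σ i).val + 1) := by
    intro S i hi
    ext j
    simp only [Finset.mem_insert, Finset.mem_inter, hU, Finset.mem_filter, Finset.mem_univ,
      true_and]
    constructor
    · rintro (rfl | ⟨hjS, hj⟩)
      · exact ⟨hi, Nat.lt_succ_of_le le_rfl⟩
      · exact ⟨hjS, Nat.lt_succ_of_lt hj⟩
    · rintro ⟨hjS, hj⟩
      rcases Nat.lt_succ_iff_lt_or_eq.mp hj with h | h
      · exact Or.inr ⟨hjS, h⟩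
      · exact Or.inl (σ.injective (Fin.ext h))
  have hpred : ∀ i : Fin n, (Finset.univ.filter (fun j => σ j < σ i)) = U (σ i).val := by
    intro i; ext j
    simp only [hU, Finset.mem_filter, Finset.mem_univ, true_and, Fin.lt_def]
  have hnotmem : ∀ i : Fin n, i ∉ U (σ i).val := by
    intro i; simp [hU]
  have key : ∀ S : Finset (Fin n),
      ∑ i ∈ S, (C (S ∩ U ((σ i).val + 1)) - C (S ∩ U (σ i).val)) = C S := by
    intro S
    have himg : ∑ i ∈ S, (C (S ∩ U ((σ i).val + 1)) - C (S ∩ U (σ i).val))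
        = ∑ k ∈ S.image (fun i => (σ i).val), (C (S ∩ U (k + 1)) - C (S ∩ U k)) := by
      rw [Finset.sum_image]
      intro a _ b _ hab
      exact σ.injective (Fin.ext hab)
    rw [himg]
    have hrange : ∑ k ∈ Finset.range n, (C (S ∩ U (k + 1)) - C (S ∩ U k))
        = ∑ k ∈ S.image (fun i => (σ i).val), (C (S ∩ U (k + 1)) - C (S ∩ U k)) := by
      apply (Finset.sum_subset ?_ ?_).symm
      · intro k hk
        simp only [Finset.mem_image] at hk
        obtain ⟨i, _, rfl⟩ := hk
        exact Finset.mem_range.mpr (σ i).isLt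
      · intro k _ hnk
        have hUeq : S ∩ U (k + 1) = S ∩ U k := by
          ext j
          simp only [Finset.mem_inter, hU, Finset.mem_filter, Finset.mem_univ, true_and]
          constructor
          · rintro ⟨hjS, hj⟩
            refine ⟨hjS, ?_⟩
            rcases Nat.lt_succ_iff_lt_or_eq.mp hj with h | h
            · exact h
            · exact absurd (Finset.mem_image.mpr ⟨j, hjS, h⟩) hnk
          · rintro ⟨hjS, hj⟩; exact ⟨hjS, Nat.lt_succ_of_lt hj⟩
        rw [hUeq, sub_self]
    rw [← hrange, Finset.sum_range_sub (fun k => C (S ∩ U k)), hU0, hUn, h0, sub_zero]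
  constructor
  · have hk := key Finset.univ
    simp only [Finset.univ_inter] at hk
    rw [← hk]
    apply Finset.sum_congr rfl
    intro i _
    have h1 : insert i (U (σ i).val) = U ((σ i).val + 1) := by
      have := hins Finset.univ i (Finset.mem_univ i)
      simpa using this
    rw [hψ i, hpred i, h1]
  · intro S
    rw [← key S]
    apply Finset.sum_le_sum
    intro i hi
    rw [hψ i, hpred i, ← hins S i hi]
    exact hsub (S ∩ U (σ i).val) (U (σ i).val) i Finset.inter_subset_right (hnotmem i)
end

section
/- The data-dependent Shapley value satisfies the symmetry axiom: if Pr_{S∼D}[ |S ∩ {i,j}| = 1 ] = 0 (i.e., every set with positive probability either contains both i and j or neither), then φ^D_i = φ^D_j. -/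
noncomputable def ddShapley (n : ℕ) (C : Finset (Fin n) → ℝ) (p : Finset (Fin n) → ℝ)
    (i : Fin n) : ℝ :=
  ∑ S ∈ Finset.univ.filter (fun S : Finset (Fin n) => i ∈ S), p S * C S / S.card

theorem stmt12 (n : ℕ) (C : Finset (Fin n) → ℝ)
    (p : Finset (Fin n) → ℝ) (hp0 : ∀ S, 0 ≤ p S)
    (hp1 : ∑ S : Finset (Fin n), p S = 1) (i j : Fin n)
    (hsym : ∑ S ∈ Finset.univ.filter
      (fun S : Finset (Fin n) => (S ∩ {i, j}).card = 1), p S = 0) :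
    ddShapley n C p i = ddShapley n C p j := by
  rcases eq_or_ne i j with rfl | hij
  · rfl
  have hz : ∀ S : Finset (Fin n), (S ∩ ({i, j} : Finset (Fin n))).card = 1 → p S = 0 := by
    intro S hS
    exact (Finset.sum_eq_zero_iff_of_nonneg (fun S _ => hp0 S)).mp hsym S
      (Finset.mem_filter.mpr ⟨Finset.mem_univ S, hS⟩)
  have h1 : ∀ a b : Fin n, a ≠ b → ({a, b} : Finset (Fin n)) = ({b, a} : Finset (Fin n)) := by
    intro a b _; ext x; simp [or_comm]
  have key : ∀ a b : Fin n, a ≠ b →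
      (∀ S : Finset (Fin n), (S ∩ ({a, b} : Finset (Fin n))).card = 1 → p S = 0) →
      ddShapley n C p a = ∑ S ∈ Finset.univ.filter
        (fun S : Finset (Fin n) => a ∈ S ∧ b ∈ S), p S * C S / S.card := by
    intro a b hab hzz
    unfold ddShapley
    rw [← Finset.sum_subset]
    · intro S hS
      simp only [Finset.mem_filter, Finset.mem_univ, true_and] at hS ⊢
      exact hS.1
    · intro S hS hS'
      simp only [Finset.mem_filter, Finset.mem_univ, true_and] at hS hS'
      have hb : b ∉ S := fun hb => hS' ⟨hS, hb⟩
      have : S ∩ ({a, b} : Finset (Fin n)) = {a} := by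
        ext x
        simp only [Finset.mem_inter, Finset.mem_insert, Finset.mem_singleton]
        constructor
        · rintro ⟨hx, rfl | rfl⟩
          · rfl
          · exact absurd hx hb
        · rintro rfl; exact ⟨hS, Or.inl rfl⟩
      have := hzz S (by rw [this]; simp)
      simp [this]
  rw [key i j hij hz, key j i hij.symm (by intro S hS; exact hz S (by rwa [h1 j i hij.symm] at hS))]
  apply Finset.sum_congr _ (fun _ _ => rfl)
  ext S; simp [and_comm]
end

section
/- Uniqueness of the data-dependent Shapley value: any assignment D ↦ φ^D ∈ ℝ^N (defined for all probability distributions D over subsets of N) satisfying the balance axiom (∑_i φ^D_i = E_{S∼D}[C(S)]), the symmetry axiom (Pr_{S∼D}[|S∩{i,j}|=1]=0 implies φ^D_i = φ^D_j), the zero-element axiom (Pr_{S∼D}[i∈S]=0 implies φ^D_i = 0), and the additivity axiom (φ^{αD1+βD2}_i = α φ^{D1}_i + β φ^{D2}_i for α+β=1, α,β≥0) must equal φ^D_i = ∑_{S : i∈S} Pr_D[S]·C(S)/|S| for every D and i. -/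
def IsDist (n : ℕ) (p : Finset (Fin n) → ℝ) : Prop :=
  (∀ S, 0 ≤ p S) ∧ ∑ S : Finset (Fin n), p S = 1

def delta15 (n : ℕ) (T : Finset (Fin n)) : Finset (Fin n) → ℝ :=
  fun S => if S = T then 1 else 0

lemma delta15_dist (n : ℕ) (T : Finset (Fin n)) : IsDist n (delta15 n T) := by
  constructor
  · intro S; unfold delta15; positivity
  · simp [delta15]

lemma delta15_filter_sum (n : ℕ) (T : Finset (Fin n)) (P : Finset (Fin n) → Prop)
    [DecidablePred P] :
    ∑ S ∈ Finset.univ.filter P, delta15 n T S = if P T then 1 else 0 := by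
  rw [Finset.sum_filter]
  have h : ∀ x : Finset (Fin n), (if P x then delta15 n T x else 0)
      = if x = T then (if P T then (1:ℝ) else 0) else 0 := by
    intro x
    by_cases hx : x = T <;> simp [delta15, hx]
  rw [Finset.sum_congr rfl (fun x _ => h x)]
  simp [Finset.sum_ite_eq']

theorem stmt15 (n : ℕ) (C : Finset (Fin n) → ℝ) (h0 : C ∅ = 0)
    (Φ : (Finset (Fin n) → ℝ) → Fin n → ℝ)
    (hbal : ∀ p, IsDist n p → ∑ i, Φ p i = ∑ S : Finset (Fin n), p S * C S)
    (hsym : ∀ p, IsDist n p → ∀ i j : Fin n,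
      (∑ S ∈ Finset.univ.filter
        (fun S : Finset (Fin n) => (S ∩ {i, j}).card = 1), p S) = 0 → Φ p i = Φ p j)
    (hzero : ∀ p, IsDist n p → ∀ i : Fin n,
      (∑ S ∈ Finset.univ.filter (fun S : Finset (Fin n) => i ∈ S), p S) = 0 →
        Φ p i = 0)
    (hadd : ∀ p₁ p₂, IsDist n p₁ → IsDist n p₂ → ∀ α β : ℝ, 0 ≤ α → 0 ≤ β →
      α + β = 1 → ∀ i : Fin n,
        Φ (fun S => α * p₁ S + β * p₂ S) i = α * Φ p₁ i + β * Φ p₂ i) :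
    ∀ p, IsDist n p → ∀ i : Fin n,
      Φ p i = ∑ S ∈ Finset.univ.filter (fun S : Finset (Fin n) => i ∈ S),
        p S * C S / S.card := by
  -- value on point masses
  have point : ∀ (T : Finset (Fin n)) (i : Fin n),
      Φ (delta15 n T) i = if i ∈ T then C T / T.card else 0 := by
    intro T i
    by_cases hi : i ∈ T
    · simp only [hi, if_true]
      have hz : ∀ j, j ∉ T → Φ (delta15 n T) j = 0 := by
        intro j hj
        apply hzero _ (delta15_dist n T)
        rw [delta15_filter_sum]
        simp [hj]
      have hs : ∀ j ∈ T, Φ (delta15 n T) j = Φ (delta15 n T) i := by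
        intro j hj
        by_cases hji : j = i
        · rw [hji]
        · apply hsym _ (delta15_dist n T)
          rw [delta15_filter_sum]
          have : T ∩ {j, i} = {j, i} :=
            Finset.inter_eq_right.mpr (by
              intro x hx
              rcases Finset.mem_insert.mp hx with h | h
              · exact h ▸ hj
              · exact (Finset.mem_singleton.mp h) ▸ hi)
          rw [this]
          simp [Finset.card_insert_of_notMem, hji]
      have hb := hbal _ (delta15_dist n T)
      have hsum : ∑ S : Finset (Fin n), delta15 n T S * C S = C T := by
        simp [delta15, Finset.sum_ite_eq']
      rw [hsum] at hb
      have hsplit : ∑ j, Φ (delta15 n T) j = T.card * Φ (delta15 n T) i := by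
        rw [← Finset.sum_filter_add_sum_filter_not Finset.univ (· ∈ T)]
        have h1 : ∑ j ∈ Finset.univ.filter (· ∈ T), Φ (delta15 n T) j
            = T.card * Φ (delta15 n T) i := by
          rw [Finset.sum_congr rfl (fun j hj => hs j (Finset.mem_filter.mp hj).2)]
          rw [Finset.sum_const]
          simp [Finset.filter_mem_eq_inter, mul_comm]
        have h2 : ∑ j ∈ Finset.univ.filter (¬ · ∈ T), Φ (delta15 n T) j = 0 :=
          Finset.sum_eq_zero (fun j hj => hz j (Finset.mem_filter.mp hj).2)
        rw [h1, h2, add_zero]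
      rw [hsplit] at hb
      have hc : (T.card : ℝ) ≠ 0 := by
        have : 0 < T.card := Finset.card_pos.mpr ⟨i, hi⟩
        exact_mod_cast this.ne'
      field_simp
      linarith [hb]
    · simp only [hi, if_false]
      apply hzero _ (delta15_dist n T)
      rw [delta15_filter_sum]
      simp [hi]
  -- main induction on support
  have main : ∀ F : Finset (Finset (Fin n)), ∀ p, IsDist n p →
      (∀ S, S ∉ F → p S = 0) → ∀ i,
      Φ p i = ∑ S ∈ F.filter (fun S => i ∈ S), p S * C S / S.card := by
    intro F
    induction F using Finset.induction_on with
    | empty =>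
      intro p hp hsupp i
      exfalso
      have h1 := hp.2
      rw [Finset.sum_eq_zero (fun S _ => hsupp S (Finset.notMem_empty S))] at h1
      norm_num at h1
    | @insert T F' hT ih =>
      intro p hp hsupp i
      have hα0 : 0 ≤ p T := hp.1 T
      have hα1 : p T ≤ 1 := by
        rw [← hp.2]
        exact Finset.single_le_sum (fun S _ => hp.1 S) (Finset.mem_univ T)
      have herase : p T + ∑ S ∈ Finset.univ.erase T, p S = 1 := by
        rw [Finset.add_sum_erase Finset.univ p (Finset.mem_univ T)]
        exact hp.2
      by_cases h1 : p T = 1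
      · have hrest : ∀ S, S ≠ T → p S = 0 := by
          intro S hS
          have hsum0 : ∑ S ∈ Finset.univ.erase T, p S = 0 := by linarith
          exact (Finset.sum_eq_zero_iff_of_nonneg (fun S _ => hp.1 S)).mp hsum0 S
            (Finset.mem_erase.mpr ⟨hS, Finset.mem_univ S⟩)
        have hpe : p = delta15 n T := by
          funext S
          by_cases hS : S = T
          · subst hS; simp [delta15, h1]
          · simp [delta15, hS, hrest S hS]
        rw [hpe, point]
        rw [Finset.sum_filter]
        rw [Finset.sum_eq_single_of_mem T (Finset.mem_insert_self T F')]
        · by_cases hi : i ∈ T <;> simp [hi, delta15]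
        · intro S _ hS
          simp [delta15, hS]
      · have hβ : (0:ℝ) < 1 - p T := by
          rcases lt_or_eq_of_le hα1 with h | h
          · linarith
          · exact absurd h h1
        set q : Finset (Fin n) → ℝ := fun S => if S = T then 0 else p S / (1 - p T)
          with hq
        have hqdist : IsDist n q := by
          constructor
          · intro S
            rw [hq]
            dsimp only
            split
            · exact le_rfl
            · exact div_nonneg (hp.1 S) hβ.le
          · have he : ∑ S ∈ Finset.univ.erase T, q S + q T = ∑ S : Finset (Fin n), q S :=
              Finset.sum_erase_add Finset.univ q (Finset.mem_univ T)
            have hqT : q T = 0 := by simp [hq]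
            have heq : ∑ S ∈ Finset.univ.erase T, q S
                = (∑ S ∈ Finset.univ.erase T, p S) / (1 - p T) := by
              rw [Finset.sum_div]
              apply Finset.sum_congr rfl
              intro S hS
              simp [hq, (Finset.mem_erase.mp hS).1]
            rw [← he, hqT, add_zero, heq]
            rw [show ∑ S ∈ Finset.univ.erase T, p S = 1 - p T by linarith]
            field_simp
        have hqsupp : ∀ S, S ∉ F' → q S = 0 := by
          intro S hS
          by_cases hST : S = T
          · simp [hq, hST]
          · simp only [hq, hST, if_false]
            rw [hsupp S (by simp [hST, hS]), zero_div]
        have hpe : p = fun S => p T * delta15 n T S + (1 - p T) * q S := by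
          funext S
          by_cases hS : S = T
          · subst hS; simp [delta15, hq]
          · simp only [delta15, hq, hS, if_false, mul_zero, zero_add]
            field_simp
        rw [hpe]
        rw [hadd (delta15 n T) q (delta15_dist n T) hqdist (p T) (1 - p T) hα0 hβ.le
          (by ring) i]
        rw [point, ih q hqdist hqsupp i]
        rw [Finset.filter_insert]
        by_cases hi : i ∈ T
        · simp only [hi, if_true]
          rw [Finset.sum_insert (by simp [hT])]
          have hTterm : (p T * delta15 n T T + (1 - p T) * q T) * C T / T.card
              = p T * (C T / T.card) := by
            simp [delta15, hq]
            ring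
          rw [hTterm, Finset.mul_sum]
          congr 1
          apply Finset.sum_congr rfl
          intro S hS
          have hST : S ≠ T := fun h => hT (h ▸ (Finset.mem_filter.mp hS).1)
          simp [delta15, hST]
          ring
        · simp only [hi, if_false, mul_zero, zero_add]
          rw [Finset.mul_sum]
          apply Finset.sum_congr rfl
          intro S hS
          have hST : S ≠ T := fun h => hT (h ▸ (Finset.mem_filter.mp hS).1)
          simp [delta15, hST]
          ring
  intro p hp i
  exact main Finset.univ p hp (fun S hS => absurd (Finset.mem_univ S) hS) i
end
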